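/- Let P ∈ ℝ^{m×(L+1)p} satisfy P · I_L = [I_m, 0], and define Ã := A − B P O_L. Let X_z ∈ ℝ^{n×r} have full column rank with column space equal to the output-nulling subspace V₀, and let A_z ∈ ℝ^{r×r} satisfy Ã X_z = X_z A_z. Then every complex eigenvalue λ of A_z is an invariant zero of the system: rank over ℂ of the Rosenbrock matrix [A − λI, B; C, D] is strictly less than n + m. Specifically, for an eigenvector α of A_z with eigenvalue λ, the pair ξ := X_z α ≠ 0 and μ := −P O_L ξ satisfies (A − λI) ξ + B μ = 0 and C ξ + D μ = 0. -/

import Mathlib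

/-!
If `u` keeps the output of `ξ` at zero, stacking the first `L + 1` outputs gives
`O_L ξ + I_L (u_0, …, u_L) = 0`; multiplying by `P` yields `P O_L ξ = -u_0`, so `y_0 = 0` reads
`C ξ = D P O_L ξ`. The columns of `X_z` lie in `V₀`, hence `C X_z = D P O_L X_z`. For an eigenvector
`α` of `A_z`, the identity `Ã X_z = X_z A_z` gives `(A - λ) ξ = B P O_L ξ` for `ξ = X_z α`, so
`(ξ, -P O_L ξ)` lies in the kernel of the Rosenbrock matrix at `λ`; it is nonzero because `X_z` is
injective, and stays so after complexification.
-/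

open Matrix

/-- Block observability matrix `O_L` with block rows `C A^k`, `k = 0,…,L`. -/
noncomputable def obsMat {n p : ℕ} (A : Matrix (Fin n) (Fin n) ℝ)
    (C : Matrix (Fin p) (Fin n) ℝ) (L : ℕ) :
    Matrix (Fin (L + 1) × Fin p) (Fin n) ℝ :=
  fun kr j => (C * A ^ (kr.1 : ℕ)) kr.2 j

/-- Block invertibility (Toeplitz) matrix `I_L` of the LTI system `(A,B,C,D)`. -/
noncomputable def invMat {n m p : ℕ} (A : Matrix (Fin n) (Fin n) ℝ)
    (B : Matrix (Fin n) (Fin m) ℝ) (C : Matrix (Fin p) (Fin n) ℝ)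
    (D : Matrix (Fin p) (Fin m) ℝ) (L : ℕ) :
    Matrix (Fin (L + 1) × Fin p) (Fin (L + 1) × Fin m) ℝ :=
  fun jr ic =>
    if (jr.1 : ℕ) = (ic.1 : ℕ) then D jr.2 ic.2
    else if (ic.1 : ℕ) < (jr.1 : ℕ) then
      (C * A ^ ((jr.1 : ℕ) - (ic.1 : ℕ) - 1) * B) jr.2 ic.2
    else 0

/-- The block matrix `[I_m, 0] ∈ ℝ^{m × (L+1)m}`. -/
noncomputable def idZero (m L : ℕ) : Matrix (Fin m) (Fin (L + 1) × Fin m) ℝ :=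
  fun r ic => if (ic.1 : ℕ) = 0 ∧ r = ic.2 then 1 else 0

/-- The state sequence of `x_{k+1} = A x_k + B u_k` from initial state `ξ`. -/
noncomputable def stateSeq {n m : ℕ} (A : Matrix (Fin n) (Fin n) ℝ)
    (B : Matrix (Fin n) (Fin m) ℝ) (ξ : Fin n → ℝ) (u : ℕ → Fin m → ℝ) :
    ℕ → Fin n → ℝ
  | 0 => ξ
  | k + 1 => A.mulVec (stateSeq A B ξ u k) + B.mulVec (u k)

/-- The output-nulling subspace `V₀`: states from which some input sequence keeps the
output `y_k = C x_k + D u_k` identically zero. -/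
def outputNulling {n m p : ℕ} (A : Matrix (Fin n) (Fin n) ℝ)
    (B : Matrix (Fin n) (Fin m) ℝ) (C : Matrix (Fin p) (Fin n) ℝ)
    (D : Matrix (Fin p) (Fin m) ℝ) : Set (Fin n → ℝ) :=
  {ξ | ∃ u : ℕ → Fin m → ℝ, ∀ k, C.mulVec (stateSeq A B ξ u k) + D.mulVec (u k) = 0}

/-- The Rosenbrock matrix `[A - zI, B; C, D] ∈ ℂ^{(n+p) × (n+m)}`. -/
noncomputable def rosenbrock {n m p : ℕ} (A : Matrix (Fin n) (Fin n) ℝ)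
    (B : Matrix (Fin n) (Fin m) ℝ) (C : Matrix (Fin p) (Fin n) ℝ)
    (D : Matrix (Fin p) (Fin m) ℝ) (z : ℂ) :
    Matrix (Fin n ⊕ Fin p) (Fin n ⊕ Fin m) ℂ :=
  Matrix.fromBlocks (A.map Complex.ofReal - z • 1) (B.map Complex.ofReal)
    (C.map Complex.ofReal) (D.map Complex.ofReal)

open Finset

namespace Matrix

variable {ι κ : Type*} [Fintype κ]

theorem mulVec_injective_of_rank_eq_card {K : Type*} [Field K] {M : Matrix ι κ K}
    (h : M.rank = Fintype.card κ) : Function.Injective M.mulVec :=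
  mulVec_injective_iff.2 <| linearIndependent_iff_card_eq_finrank_span.2 <| by
    rw [← h, rank_eq_finrank_span_cols, Set.finrank]

theorem rank_lt_card_width_of_mulVec_eq_zero {K : Type*} [Field K] {M : Matrix ι κ K}
    {v : κ → K} (hv : v ≠ 0) (hMv : M *ᵥ v = 0) : M.rank < Fintype.card κ :=
  M.rank_le_card_width.lt_of_ne fun h =>
    hv <| mulVec_injective_of_rank_eq_card h <| by rw [hMv, mulVec_zero]

theorem re_map_ofReal_mulVec (M : Matrix ι κ ℝ) (v : κ → ℂ) (i : ι) :
    ((M.map Complex.ofReal *ᵥ v) i).re = (M *ᵥ fun j => (v j).re) i := by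
  simp [mulVec, dotProduct, Complex.re_sum]

theorem im_map_ofReal_mulVec (M : Matrix ι κ ℝ) (v : κ → ℂ) (i : ι) :
    ((M.map Complex.ofReal *ᵥ v) i).im = (M *ᵥ fun j => (v j).im) i := by
  simp [mulVec, dotProduct, Complex.im_sum]

theorem map_ofReal_mulVec_injective {M : Matrix ι κ ℝ} (hM : Function.Injective M.mulVec) :
    Function.Injective (M.map Complex.ofReal).mulVec := by
  refine (injective_iff_map_eq_zero (M.map Complex.ofReal).mulVecLin).2 fun v hv => ?_
  rw [mulVecLin_apply] at hv
  have hre : (fun j => (v j).re) = 0 := hM <| by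
    ext i; simpa [hv] using (re_map_ofReal_mulVec M v i).symm
  have him : (fun j => (v j).im) = 0 := hM <| by
    ext i; simpa [hv] using (im_map_ofReal_mulVec M v i).symm
  funext j
  apply Complex.ext
  · exact congrFun hre j
  · exact congrFun him j

theorem map_ofReal_mul {l m o : Type*} [Fintype m] (M : Matrix l m ℝ) (N : Matrix m o ℝ) :
    (M * N).map Complex.ofReal = M.map Complex.ofReal * N.map Complex.ofReal :=
  Matrix.map_mul (f := Complex.ofRealHom)

theorem map_ofReal_sub {l m : Type*} (M N : Matrix l m ℝ) :
    (M - N).map Complex.ofReal = M.map Complex.ofReal - N.map Complex.ofReal :=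
  Matrix.map_sub _ Complex.ofReal_sub M N

end Matrix

section LTI

variable {n m p : ℕ} (A : Matrix (Fin n) (Fin n) ℝ) (B : Matrix (Fin n) (Fin m) ℝ)
  (C : Matrix (Fin p) (Fin n) ℝ) (D : Matrix (Fin p) (Fin m) ℝ)

theorem stateSeq_eq_sum (ξ : Fin n → ℝ) (u : ℕ → Fin m → ℝ) (k : ℕ) :
    stateSeq A B ξ u k = A ^ k *ᵥ ξ + ∑ i ∈ range k, (A ^ (k - 1 - i) * B) *ᵥ u i := by
  induction k with
  | zero => simp [stateSeq]
  | succ k ih =>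
    have hpow : ∀ i ∈ range k, A *ᵥ ((A ^ (k - 1 - i) * B) *ᵥ u i) =
        (A ^ (k + 1 - 1 - i) * B) *ᵥ u i := by
      intro i hi
      rw [mulVec_mulVec, ← Matrix.mul_assoc, ← pow_succ',
        show k - 1 - i + 1 = k + 1 - 1 - i by have := mem_range.1 hi; omega]
    rw [stateSeq, ih, mulVec_add, mulVec_sum, sum_congr rfl hpow, sum_range_succ,
      mulVec_mulVec, ← pow_succ', Nat.add_sub_cancel, Nat.sub_self, pow_zero,
      Matrix.one_mul, add_assoc]

variable {L : ℕ}

theorem obsMat_mulVec_apply (ξ : Fin n → ℝ) (k : Fin (L + 1)) (j : Fin p) :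
    (obsMat A C L *ᵥ ξ) (k, j) = ((C * A ^ (k : ℕ)) *ᵥ ξ) j :=
  rfl

theorem invMat_mulVec_apply (u : ℕ → Fin m → ℝ) (k : Fin (L + 1)) (j : Fin p) :
    (invMat A B C D L *ᵥ fun ic => u ic.1 ic.2) (k, j) =
      (∑ i ∈ range k, (C * A ^ (k - 1 - i) * B) *ᵥ u i) j + (D *ᵥ u k) j := by
  have hblock : ∀ i : Fin (L + 1), ∑ c, invMat A B C D L (k, j) (i, c) * u i c =
      (if (i : ℕ) < k then ((C * A ^ ((k : ℕ) - 1 - i) * B) *ᵥ u i) j else 0) +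
        if k = (i : ℕ) then (D *ᵥ u i) j else 0 := by
    intro i
    rcases lt_trichotomy (i : ℕ) k with h | h | h
    · simp [invMat, h, h.ne', Nat.sub_right_comm (k : ℕ) i 1, mulVec, dotProduct]
    · simp [invMat, h, mulVec, dotProduct]
    · simp [invMat, h.ne, h.not_gt]
  have hfilter : (range (L + 1)).filter (· < (k : ℕ)) = range k := by
    ext i
    simp only [mem_filter, mem_range]
    omega
  conv_lhs => rw [mulVec, dotProduct, Fintype.sum_prod_type]
  rw [sum_congr rfl fun i _ => hblock i, sum_add_distrib,
    Fin.sum_univ_eq_sum_range (fun i => if i < k then ((C * A ^ (k - 1 - i) * B) *ᵥ u i) j else 0),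
    Fin.sum_univ_eq_sum_range (fun i => if k = i then (D *ᵥ u i) j else 0),
    ← sum_filter, hfilter, sum_ite_eq, if_pos (mem_range.2 k.isLt), Finset.sum_apply]

theorem obsMat_mulVec_add_invMat_mulVec_apply (ξ : Fin n → ℝ) (u : ℕ → Fin m → ℝ)
    (k : Fin (L + 1)) (j : Fin p) :
    (obsMat A C L *ᵥ ξ + invMat A B C D L *ᵥ fun ic => u ic.1 ic.2) (k, j) =
      (C *ᵥ stateSeq A B ξ u k + D *ᵥ u k) j := by
  rw [Pi.add_apply, obsMat_mulVec_apply, invMat_mulVec_apply, stateSeq_eq_sum, mulVec_add,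
    mulVec_sum]
  simp only [Pi.add_apply, mulVec_mulVec, Matrix.mul_assoc]
  ring

variable {A B C D}

theorem obsMat_mulVec_add_invMat_mulVec_eq_zero {ξ : Fin n → ℝ} {u : ℕ → Fin m → ℝ}
    (hu : ∀ k, C *ᵥ stateSeq A B ξ u k + D *ᵥ u k = 0) :
    obsMat A C L *ᵥ ξ + invMat A B C D L *ᵥ (fun ic => u ic.1 ic.2) = 0 := by
  ext ⟨k, j⟩
  exact (obsMat_mulVec_add_invMat_mulVec_apply A B C D ξ u k j).trans (congrFun (hu k) j)

theorem idZero_mulVec (v : Fin (L + 1) × Fin m → ℝ) : idZero m L *ᵥ v = fun s => v (0, s) := by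
  ext s
  simp [idZero, mulVec, dotProduct, Fintype.sum_prod_type, ite_and]

theorem mulVec_eq_of_mem_outputNulling {P : Matrix (Fin m) (Fin (L + 1) × Fin p) ℝ}
    (hP : P * invMat A B C D L = idZero m L) {ξ : Fin n → ℝ} (hξ : ξ ∈ outputNulling A B C D) :
    C *ᵥ ξ = D *ᵥ ((P * obsMat A C L) *ᵥ ξ) := by
  obtain ⟨u, hu⟩ := hξ
  have hfeedback : (P * obsMat A C L) *ᵥ ξ = -u 0 := by
    have h := congrArg (P *ᵥ ·) (obsMat_mulVec_add_invMat_mulVec_eq_zero (L := L) hu)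
    simp only [mulVec_add, mulVec_mulVec, hP, idZero_mulVec, mulVec_zero] at h
    exact eq_neg_of_add_eq_zero_left h
  rw [hfeedback, mulVec_neg, eq_neg_iff_add_eq_zero]
  exact hu 0

theorem mul_eq_of_mulVec_mem_outputNulling {κ : Type*} [Fintype κ]
    {P : Matrix (Fin m) (Fin (L + 1) × Fin p) ℝ} (hP : P * invMat A B C D L = idZero m L)
    {X : Matrix (Fin n) κ ℝ} (hX : ∀ w, X *ᵥ w ∈ outputNulling A B C D) :
    C * X = D * (P * obsMat A C L * X) :=
  ext_iff_mulVec.2 fun w => by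
    simpa only [← mulVec_mulVec] using mulVec_eq_of_mem_outputNulling hP (hX w)

theorem rank_rosenbrock_lt (z : ℂ) {ξ : Fin n → ℂ} {μ : Fin m → ℂ} (hξ : ξ ≠ 0)
    (hstate : (A.map Complex.ofReal - z • 1) *ᵥ ξ + B.map Complex.ofReal *ᵥ μ = 0)
    (houtput : C.map Complex.ofReal *ᵥ ξ + D.map Complex.ofReal *ᵥ μ = 0) :
    (rosenbrock A B C D z).rank < n + m := by
  have hker : rosenbrock A B C D z *ᵥ Sum.elim ξ μ = 0 := by
    rw [rosenbrock, fromBlocks_mulVec, Sum.elim_comp_inl, Sum.elim_comp_inr, hstate, houtput,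
      Sum.elim_zero_zero]
  simpa using rank_lt_card_width_of_mulVec_eq_zero
    (fun h => hξ (by simpa using congrArg (· ∘ Sum.inl) h)) hker

end LTI

/-- Every eigenvalue `λ` of the zero-dynamics matrix `A_z` (where `Ã X_z = X_z A_z`,
`X_z` a full-column-rank basis matrix of `V₀`, `Ã := A - B P O_L`) is an invariant zero:
with `ξ := X_z α ≠ 0` and `μ := -P O_L ξ`, one has `(A - λI) ξ + B μ = 0`,
`C ξ + D μ = 0`, and the Rosenbrock matrix at `λ` has rank `< n + m`. -/
theorem eigenvalue_of_Az_is_invariant_zero {n m p L r : ℕ}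
    (A : Matrix (Fin n) (Fin n) ℝ) (B : Matrix (Fin n) (Fin m) ℝ)
    (C : Matrix (Fin p) (Fin n) ℝ) (D : Matrix (Fin p) (Fin m) ℝ)
    (P : Matrix (Fin m) (Fin (L + 1) × Fin p) ℝ)
    (hP : P * invMat A B C D L = idZero m L)
    (Xz : Matrix (Fin n) (Fin r) ℝ) (hXzrank : Xz.rank = r)
    (hXz : ∀ ξ : Fin n → ℝ, ξ ∈ outputNulling A B C D ↔ ∃ w : Fin r → ℝ, Xz.mulVec w = ξ)
    (Az : Matrix (Fin r) (Fin r) ℝ)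
    (hAz : (A - B * P * obsMat A C L) * Xz = Xz * Az) :
    ∀ (lam : ℂ) (α : Fin r → ℂ), α ≠ 0 → (Az.map Complex.ofReal).mulVec α = lam • α →
      (Xz.map Complex.ofReal).mulVec α ≠ 0 ∧
      (A.map Complex.ofReal - lam • 1).mulVec ((Xz.map Complex.ofReal).mulVec α) +
        (B.map Complex.ofReal).mulVec
          (-((P * obsMat A C L).map Complex.ofReal).mulVec
            ((Xz.map Complex.ofReal).mulVec α)) = 0 ∧
      (C.map Complex.ofReal).mulVec ((Xz.map Complex.ofReal).mulVec α) +
        (D.map Complex.ofReal).mulVec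
          (-((P * obsMat A C L).map Complex.ofReal).mulVec
            ((Xz.map Complex.ofReal).mulVec α)) = 0 ∧
      (rosenbrock A B C D lam).rank < n + m := by
  intro lam α hα heig
  set Q := P * obsMat A C L
  set ξ := Xz.map Complex.ofReal *ᵥ α
  have hξ : ξ ≠ 0 := fun h => hα <|
    map_ofReal_mulVec_injective (mulVec_injective_of_rank_eq_card (by simpa using hXzrank))
      (h.trans (mulVec_zero _).symm)
  have hclosedLoop : A.map Complex.ofReal *ᵥ ξ -
      B.map Complex.ofReal *ᵥ (Q.map Complex.ofReal *ᵥ ξ) = lam • ξ := by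
    have hAzQ : (A - B * Q) * Xz = Xz * Az := by rw [← hAz, Matrix.mul_assoc B]
    simpa only [map_ofReal_mul, map_ofReal_sub, ← mulVec_mulVec, sub_mulVec, heig, mulVec_smul]
      using congrArg (fun M => M.map Complex.ofReal *ᵥ α) hAzQ
  have hfeedthrough :
      C.map Complex.ofReal *ᵥ ξ = D.map Complex.ofReal *ᵥ (Q.map Complex.ofReal *ᵥ ξ) := by
    have hCX : C * Xz = D * (Q * Xz) :=
      mul_eq_of_mulVec_mem_outputNulling hP fun w => (hXz _).2 ⟨w, rfl⟩
    simpa only [map_ofReal_mul, ← mulVec_mulVec]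
      using congrArg (fun M => M.map Complex.ofReal *ᵥ α) hCX
  have hstate : (A.map Complex.ofReal - lam • 1) *ᵥ ξ +
      B.map Complex.ofReal *ᵥ -(Q.map Complex.ofReal *ᵥ ξ) = 0 := by
    rw [sub_mulVec, smul_mulVec, one_mulVec, mulVec_neg, ← hclosedLoop]
    abel
  have houtput :
      C.map Complex.ofReal *ᵥ ξ + D.map Complex.ofReal *ᵥ -(Q.map Complex.ofReal *ᵥ ξ) = 0 := by
    rw [mulVec_neg, hfeedthrough, add_neg_cancel]
  exact ⟨hξ, hstate, houtput, rank_rosenbrock_lt lam hξ hstate houtput⟩
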